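/- arXiv:1611.07816 — 2 statements merged into one kernel-verified Lean document; each statement's English description precedes it below -/
import Mathlib

section
/- Let Q = I_1 × ··· × I_d be a box in ℝ^d, let S be a face of Q orthogonal to the i-th coordinate direction, let a be a vertex of Q not on S, and set γ(x) = (x_i − a_i)e_i. Then for every v ∈ W^{1,1}(Q), the average of v over S minus the average of v over Q equals the average over Q of γ·∇v, i.e., (1/|S|)∫_S v − (1/|Q|)∫_Q v = (1/|Q|)∫_Q γ·∇v. -/
/-!
Slice the box into segments parallel to `eᵢ`, one through each point `z` of the face. Along such
a segment `t ↦ (t - lᵢ) v(t, z)` has derivative `v + (t - lᵢ) ∂ᵢv`, so by the fundamental theorem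
of calculus the integral of `v + (xᵢ - lᵢ) ∂ᵢv` over the segment is `(uᵢ - lᵢ) v(uᵢ, z)`.
Integrating over the face (Fubini) and dividing by `|Q| = (uᵢ - lᵢ) |S|` gives the identity.
-/

open MeasureTheory

/-- Embedding of the face of the box orthogonal to direction `i` at height `c`:
a point of the face is determined by its remaining `d−1` coordinates. -/
def faceEmb {d : ℕ} (i : Fin d) (c : ℝ) (z : {j : Fin d // j ≠ i} → ℝ) :
    Fin d → ℝ :=
  fun j => if h : j = i then c else z ⟨j, h⟩

namespace faceEmb

variable {d : ℕ} (i : Fin d)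

@[simp] lemma apply_self (c : ℝ) (z : {j : Fin d // j ≠ i} → ℝ) : faceEmb i c z i = c :=
  dif_pos rfl

lemma apply_of_ne (c : ℝ) (z : {j : Fin d // j ≠ i} → ℝ) {j : Fin d} (h : j ≠ i) :
    faceEmb i c z j = z ⟨j, h⟩ :=
  dif_neg h

lemma hasDerivAt (z : {j : Fin d // j ≠ i} → ℝ) (t : ℝ) :
    HasDerivAt (fun s => faceEmb i s z) (Pi.single i 1) t := by
  refine hasDerivAt_pi.2 fun j => ?_
  by_cases h : j = i
  · subst h; simpa using hasDerivAt_id' t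
  · simpa [apply_of_ne i _ _ h, Pi.single_eq_of_ne h] using hasDerivAt_const t (z ⟨j, h⟩)

lemma preimage_pi (I : Fin d → Set ℝ) :
    (fun p : ({j : Fin d // j ≠ i} → ℝ) × ℝ => faceEmb i p.2 p.1) ⁻¹' Set.univ.pi I =
      (Set.univ.pi fun j : {j : Fin d // j ≠ i} => I j) ×ˢ I i := by
  ext ⟨z, t⟩
  simp only [Set.mem_preimage, Set.mem_pi, Set.mem_univ, forall_const, Set.mem_prod]
  refine ⟨fun h => ⟨fun j => ?_, by simpa using h i⟩, fun ⟨hz, ht⟩ j => ?_⟩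
  · simpa [apply_of_ne i _ _ j.2] using h j
  · by_cases h : j = i
    · subst h; simpa using ht
    · simpa [apply_of_ne i _ _ h] using hz ⟨j, h⟩

/-- The face coordinate comes first, so that Fubini leaves the integral along `eᵢ` innermost. -/
noncomputable def measurableEquiv : (({j : Fin d // j ≠ i} → ℝ) × ℝ) ≃ᵐ (Fin d → ℝ) :=
  MeasurableEquiv.prodComm.trans <|
    ((MeasurableEquiv.funUnique {j : Fin d // j = i} ℝ).symm.prodCongr
      (MeasurableEquiv.refl _)).trans
    (MeasurableEquiv.piEquivPiSubtypeProd (fun _ : Fin d => ℝ) (· = i)).symm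

lemma coe_measurableEquiv : ⇑(measurableEquiv i) = fun p => faceEmb i p.2 p.1 := by
  funext p j
  simp [measurableEquiv, faceEmb, MeasurableEquiv.piEquivPiSubtypeProd,
    Equiv.piEquivPiSubtypeProd, MeasurableEquiv.funUnique, MeasurableEquiv.prodCongr,
    MeasurableEquiv.prodComm]

lemma measurePreserving_measurableEquiv : MeasurePreserving (measurableEquiv i) volume volume := by
  have hsplit : MeasurePreserving
      (MeasurableEquiv.piEquivPiSubtypeProd (fun _ : Fin d => ℝ) (· = i)).symm
      (volume : Measure (({j : Fin d // j = i} → ℝ) × ({j : Fin d // j ≠ i} → ℝ))) volume := by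
    convert (volume_preserving_piEquivPiSubtypeProd (fun _ : Fin d => ℝ) (· = i)).symm _ <;> rfl
  have hline := ((volume_preserving_funUnique {j : Fin d // j = i} ℝ).symm _).prod
    (MeasurePreserving.id (volume : Measure ({j : Fin d // j ≠ i} → ℝ)))
  exact hsplit.comp (hline.comp Measure.measurePreserving_swap)

end faceEmb

section

variable {d : ℕ} (i : Fin d) {E : Type*} [NormedAddCommGroup E] [NormedSpace ℝ E]

theorem setIntegral_univ_pi_eq_setIntegral_faceEmb (I : Fin d → Set ℝ)
    {G : (Fin d → ℝ) → E} (hG : IntegrableOn G (Set.univ.pi I)) :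
    ∫ x in Set.univ.pi I, G x =
      ∫ z in Set.univ.pi (fun j : {j : Fin d // j ≠ i} => I j), ∫ t in I i, G (faceEmb i t z) := by
  have hmp := faceEmb.measurePreserving_measurableEquiv i
  have hemb := (faceEmb.measurableEquiv i).measurableEmbedding
  rw [← hmp.integrableOn_comp_preimage hemb, faceEmb.coe_measurableEquiv,
    faceEmb.preimage_pi] at hG
  rw [← hmp.setIntegral_preimage_emb hemb, faceEmb.coe_measurableEquiv, faceEmb.preimage_pi]
  exact setIntegral_prod _ hG

theorem intervalIntegral.integral_sub_smul_deriv_add [CompleteSpace E] {g g' : ℝ → E} {a b : ℝ}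
    (hg : ∀ t ∈ Set.uIcc a b, HasDerivAt g (g' t) t)
    (hint : IntervalIntegrable (fun t => (t - a) • g' t + g t) volume a b) :
    ∫ t in a..b, ((t - a) • g' t + g t) = (b - a) • g b := by
  have hderiv : ∀ t ∈ Set.uIcc a b,
      HasDerivAt (fun s => (s - a) • g s) ((t - a) • g' t + g t) t := fun t ht => by
    simpa only [one_smul] using ((hasDerivAt_id' t).sub_const a).fun_smul (hg t ht)
  simp [intervalIntegral.integral_eq_sub_of_hasDerivAt hderiv hint]

lemma hasDerivAt_comp_faceEmb {v : (Fin d → ℝ) → E} (z : {j : Fin d // j ≠ i} → ℝ) (t : ℝ)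
    (hv : DifferentiableAt ℝ v (faceEmb i t z)) :
    HasDerivAt (fun s => v (faceEmb i s z)) (fderiv ℝ v (faceEmb i t z) (Pi.single i 1)) t :=
  hv.hasFDerivAt.comp_hasDerivAt t (faceEmb.hasDerivAt i z t)

theorem setIntegral_univ_pi_Icc_sub_smul_fderiv_single [CompleteSpace E]
    {v : (Fin d → ℝ) → E} (hv : ContDiff ℝ 1 v) {l u : Fin d → ℝ} (hlu : l i ≤ u i) :
    ∫ x in Set.univ.pi (fun j => Set.Icc (l j) (u j)), (x i - l i) • fderiv ℝ v x (Pi.single i 1) =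
      (u i - l i) • (∫ z in Set.univ.pi fun j : {j : Fin d // j ≠ i} => Set.Icc (l j) (u j),
          v (faceEmb i (u i) z)) -
        ∫ x in Set.univ.pi (fun j => Set.Icc (l j) (u j)), v x := by
  have hbox : IsCompact (Set.univ.pi fun j => Set.Icc (l j) (u j)) :=
    isCompact_univ_pi fun _ => isCompact_Icc
  have hdv : Continuous fun x => fderiv ℝ v x (Pi.single i 1) :=
    (hv.continuous_fderiv one_ne_zero).clm_apply continuous_const
  have hweighted : Continuous fun x : Fin d → ℝ => (x i - l i) • fderiv ℝ v x (Pi.single i 1) :=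
    ((continuous_apply i).sub continuous_const).smul hdv
  rw [eq_sub_iff_add_eq, ← integral_add (hweighted.continuousOn.integrableOn_compact hbox)
    (hv.continuous.continuousOn.integrableOn_compact hbox),
    setIntegral_univ_pi_eq_setIntegral_faceEmb i _
      (G := fun x => (x i - l i) • fderiv ℝ v x (Pi.single i 1) + v x)
      ((hweighted.add hv.continuous).continuousOn.integrableOn_compact hbox),
    ← integral_smul]
  refine integral_congr_ae (.of_forall fun z => ?_)
  simp only [faceEmb.apply_self]
  rw [integral_Icc_eq_integral_Ioc, ← intervalIntegral.integral_of_le hlu]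
  have hline : Continuous fun t => faceEmb i t z :=
    continuous_iff_continuousAt.2 fun t => (faceEmb.hasDerivAt i z t).continuousAt
  exact intervalIntegral.integral_sub_smul_deriv_add
    (fun t _ => hasDerivAt_comp_faceEmb i z t (hv.differentiable one_ne_zero _))
    ((((continuous_id.sub continuous_const).smul (hdv.comp hline)).add
      (hv.continuous.comp hline)).intervalIntegrable _ _)

end

theorem face_average_sub_box_average_general (d : ℕ) (i : Fin d)
    (l u : Fin d → ℝ) (hlu : ∀ j, l j < u j)
    (v : (Fin d → ℝ) → ℝ) (hv : ContDiff ℝ 1 v) :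
    (1 / ∏ j : {j : Fin d // j ≠ i}, (u j - l j)) *
        (∫ z in Set.univ.pi fun j : {j : Fin d // j ≠ i} =>
          Set.Icc (l j) (u j), v (faceEmb i (u i) z))
      - (1 / ∏ j, (u j - l j)) *
        (∫ x in Set.univ.pi fun j => Set.Icc (l j) (u j), v x)
      = (1 / ∏ j, (u j - l j)) *
        ∫ x in Set.univ.pi fun j => Set.Icc (l j) (u j),
          (x i - l i) * fderiv ℝ v x (Pi.single i 1) := by
  have key := setIntegral_univ_pi_Icc_sub_smul_fderiv_single i hv (hlu i).le
  simp only [smul_eq_mul] at key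
  have hface : 0 < ∏ j : {j : Fin d // j ≠ i}, (u j - l j) :=
    Finset.prod_pos fun j _ => sub_pos.2 (hlu j)
  have hside : 0 < u i - l i := sub_pos.2 (hlu i)
  rw [key, Fintype.prod_eq_mul_prod_subtype_ne _ i]
  field_simp

/-- Box average identity: let `Q = I 1 × ⋯ × I d` with `I j = [l j, u j]`, let
`S` be the face of `Q` where `x i = u i`, let `a` be a vertex of `Q` not on `S`
(so `a i = l i`) and `γ(x) = (x i − l i) eᵢ`. Then for every `v ∈ W^{1,1}(Q)`
(stated for `C¹` functions `v`, dense in `W^{1,1}(Q)`),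
`(1/|S|)∫_S v − (1/|Q|)∫_Q v = (1/|Q|)∫_Q γ·∇v`. -/
theorem face_average_sub_box_average (d : ℕ) (hd : 0 < d) (i : Fin d)
    (l u : Fin d → ℝ) (hlu : ∀ j, l j < u j)
    (v : (Fin d → ℝ) → ℝ) (hv : ContDiff ℝ 1 v) :
    (1 / ∏ j : {j : Fin d // j ≠ i}, (u j - l j)) *
        (∫ z in Set.univ.pi fun j : {j : Fin d // j ≠ i} =>
          Set.Icc (l j) (u j), v (faceEmb i (u i) z))
      - (1 / ∏ j, (u j - l j)) *
        (∫ x in Set.univ.pi fun j => Set.Icc (l j) (u j), v x)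
      = (1 / ∏ j, (u j - l j)) *
        ∫ x in Set.univ.pi fun j => Set.Icc (l j) (u j),
          (x i - l i) * fderiv ℝ v x (Pi.single i 1) :=
  face_average_sub_box_average_general d i l u hlu v hv
end

section
/- Weighted trace identity for boundary B-splines: with Q, S, β, γ and p as in the homogeneity setting (β a tensor-product function with β_i(x_i) = C|x_i−a_i|^p on Q, S a face where β does not vanish identically), for every w ∈ W^{1,1}(Q): (∫_S wβ)/(∫_S β) − (∫_Q wβ)/(∫_Q β) = (1/(p+1)) (∫_Q (γ·∇w) β)/(∫_Q β). -/
open MeasureTheory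

/-! Write `β = C (xᵢ - lᵢ)^p β'` with `β'` independent of `xᵢ`. Since `γ·∇β = p β`, the
divergence of `v β γ` is `(γ·∇v) β + (p + 1) v β`, which on each segment orthogonal to `S` is
`C β' ∂ₜ ((t - lᵢ)^(p+1) v)`. Integrating over the segment and then over `S` (Fubini) gives
`(uᵢ - lᵢ) ∫_S v β = ∫_Q (γ·∇v) β + (p + 1) ∫_Q v β` for every `C¹` function `v`.
For `v = 1` this reads `(uᵢ - lᵢ) ∫_S β = (p + 1) ∫_Q β`, and dividing the case `v = w` by it
gives the identity. -/

open Set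

instance instUniqueSubtypeNotNe {α : Type*} (a : α) : Unique {x : α // ¬x ≠ a} where
  default := ⟨a, not_not_intro rfl⟩
  uniq x := Subtype.ext (not_not.mp x.2)

section FaceCoordinates

variable {d : ℕ} (i : Fin d)

@[simp] lemma faceEmb_self (c : ℝ) (z : {j : Fin d // j ≠ i} → ℝ) : faceEmb i c z i = c :=
  dif_pos rfl

@[simp] lemma faceEmb_of_ne {j : Fin d} (h : j ≠ i) (c : ℝ) (z : {j : Fin d // j ≠ i} → ℝ) :
    faceEmb i c z j = z ⟨j, h⟩ :=
  dif_neg h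

lemma hasDerivAt_faceEmb (z : {j : Fin d // j ≠ i} → ℝ) (t : ℝ) :
    HasDerivAt (fun s => faceEmb i s z) (Pi.single i 1) t := by
  have h : (fun s => faceEmb i s z)
      = fun s => faceEmb i 0 z + s • (Pi.single i 1 : Fin d → ℝ) := by
    funext s j
    rcases eq_or_ne j i with rfl | h
    · simp
    · simp [h]
  rw [h]
  simpa using
    ((hasDerivAt_id t).smul_const (Pi.single i 1 : Fin d → ℝ)).const_add (faceEmb i 0 z)

lemma prod_faceEmb (f : Fin d → ℝ → ℝ) (t : ℝ) (z : {j : Fin d // j ≠ i} → ℝ) :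
    ∏ k, f k (faceEmb i t z k) = f i t * ∏ j : {j : Fin d // j ≠ i}, f j (z j) := by
  rw [← Finset.mul_prod_erase _ _ (Finset.mem_univ i), faceEmb_self,
    Finset.prod_subtype (Finset.univ.erase i) (p := (· ≠ i)) (fun _ => by simp)]
  exact congrArg _ (Finset.prod_congr rfl fun j _ => by rw [faceEmb_of_ne i j.prop])

def faceEquiv : (Fin d → ℝ) ≃ᵐ ({j : Fin d // j ≠ i} → ℝ) × ℝ :=
  (MeasurableEquiv.piEquivPiSubtypeProd (fun _ => ℝ) (· ≠ i)).trans
    ((MeasurableEquiv.refl _).prodCongr (MeasurableEquiv.piUnique _))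

lemma faceEquiv_apply (x : Fin d → ℝ) :
    faceEquiv i x = (fun j : {j : Fin d // j ≠ i} => x j, x i) :=
  rfl

lemma faceEquiv_symm_apply (y : ({j : Fin d // j ≠ i} → ℝ) × ℝ) :
    (faceEquiv i).symm y = faceEmb i y.2 y.1 := by
  rw [MeasurableEquiv.symm_apply_eq, faceEquiv_apply]
  ext j
  · simp [j.prop]
  · simp

lemma measurePreserving_faceEquiv : MeasurePreserving (faceEquiv i) := by
  have h := (MeasurePreserving.id (volume : Measure ({j : Fin d // j ≠ i} → ℝ))).prod
    (volume_preserving_piUnique fun _ : {j : Fin d // ¬j ≠ i} => ℝ)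
  rw [← Measure.volume_eq_prod, ← Measure.volume_eq_prod] at h
  exact h.comp (volume_preserving_piEquivPiSubtypeProd _ _)

lemma faceEquiv_preimage_pi_Icc (l u : Fin d → ℝ) :
    faceEquiv i ⁻¹'
        ((univ.pi fun j : {j : Fin d // j ≠ i} => Icc (l j) (u j)) ×ˢ Icc (l i) (u i))
      = univ.pi fun j => Icc (l j) (u j) := by
  ext x
  simp only [mem_preimage, faceEquiv_apply, mem_prod, mem_univ_pi, Subtype.forall]
  exact ⟨fun h j => if hj : j = i then hj ▸ h.2 else h.1 j hj, fun h => ⟨fun j _ => h j, h i⟩⟩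

lemma setIntegral_pi_Icc_eq_integral_face {E : Type*} [NormedAddCommGroup E] [NormedSpace ℝ E]
    (l u : Fin d → ℝ) {f : (Fin d → ℝ) → E}
    (hf : IntegrableOn f (univ.pi fun j => Icc (l j) (u j))) :
    ∫ x in univ.pi fun j => Icc (l j) (u j), f x
      = ∫ z in univ.pi fun j : {j : Fin d // j ≠ i} => Icc (l j) (u j),
          ∫ t in Icc (l i) (u i), f (faceEmb i t z) := by
  set S := univ.pi fun j : {j : Fin d // j ≠ i} => Icc (l j) (u j)
  have hmp := measurePreserving_faceEquiv i
  have hemb := (faceEquiv i).measurableEmbedding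
  rw [← faceEquiv_preimage_pi_Icc i l u] at hf ⊢
  have hf' :
      IntegrableOn (f ∘ (faceEquiv i).symm) (S ×ˢ Icc (l i) (u i)) (volume.prod volume) := by
    rw [← Measure.volume_eq_prod, ← hmp.integrableOn_comp_preimage hemb]
    simpa only [Function.comp_def, MeasurableEquiv.symm_apply_apply] using hf
  calc ∫ x in faceEquiv i ⁻¹' (S ×ˢ Icc (l i) (u i)), f x
      = ∫ x in faceEquiv i ⁻¹' (S ×ˢ Icc (l i) (u i)),
          f ((faceEquiv i).symm (faceEquiv i x)) := by
        simp only [MeasurableEquiv.symm_apply_apply]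
    _ = ∫ y in S ×ˢ Icc (l i) (u i), f ((faceEquiv i).symm y) :=
        hmp.setIntegral_preimage_emb hemb (f ∘ (faceEquiv i).symm) _
    _ = ∫ z in S, ∫ t in Icc (l i) (u i), f (faceEmb i t z) := by
        rw [Measure.volume_eq_prod]
        simpa only [Function.comp_apply, faceEquiv_symm_apply] using setIntegral_prod _ hf'

end FaceCoordinates

section EulerIdentity

variable {a b : ℝ} (p : ℕ) {g g' : ℝ → ℝ}

/-- `(t - a) ^ (p + 1) * g t` is a primitive of the integrand. -/
lemma integral_deriv_mul_pow_sub (hab : a ≤ b) (hg : ∀ t ∈ Icc a b, HasDerivAt g (g' t) t)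
    (hg' : ContinuousOn g' (Icc a b)) :
    ∫ t in a..b, ((t - a) * g' t + (p + 1) * g t) * (t - a) ^ p = (b - a) ^ (p + 1) * g b := by
  rw [← uIcc_of_le hab] at hg hg'
  have hgc : ContinuousOn g (uIcc a b) := fun t ht => (hg t ht).continuousAt.continuousWithinAt
  have hderiv : ∀ t ∈ uIcc a b, HasDerivAt (fun s => (s - a) ^ (p + 1) * g s)
      (((t - a) * g' t + (p + 1) * g t) * (t - a) ^ p) t := by
    intro t ht
    have hpow : HasDerivAt (fun s => (s - a) ^ (p + 1)) ((p + 1) * (t - a) ^ p) t := by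
      simpa using ((hasDerivAt_id t).sub_const a).fun_pow (p + 1)
    exact (hpow.mul (hg t ht)).congr_deriv (by ring)
  have hint :
      ContinuousOn (fun t => ((t - a) * g' t + (p + 1) * g t) * (t - a) ^ p) (uIcc a b) := by
    fun_prop
  rw [intervalIntegral.integral_eq_sub_of_hasDerivAt hderiv hint.intervalIntegrable]
  simp

lemma setIntegral_Icc_deriv_mul_weight (hab : a ≤ b) (hg : ∀ t ∈ Icc a b, HasDerivAt g (g' t) t)
    (hg' : ContinuousOn g' (Icc a b)) {c : ℝ} {β : ℝ → ℝ}
    (hβ : ∀ t ∈ Icc a b, β t = c * |t - a| ^ p) :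
    ∫ t in Icc a b, ((t - a) * g' t + (p + 1) * g t) * β t = c * (b - a) ^ (p + 1) * g b := by
  calc ∫ t in Icc a b, ((t - a) * g' t + (p + 1) * g t) * β t
      = ∫ t in Icc a b, c * (((t - a) * g' t + (p + 1) * g t) * (t - a) ^ p) := by
        refine setIntegral_congr_fun measurableSet_Icc fun t ht => ?_
        rw [hβ t ht, abs_of_nonneg (sub_nonneg.2 ht.1)]
        ring
    _ = c * (b - a) ^ (p + 1) * g b := by
        rw [integral_const_mul, integral_Icc_eq_integral_Ioc, ← intervalIntegral.integral_of_le hab,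
          integral_deriv_mul_pow_sub p hab hg hg', mul_assoc]

end EulerIdentity

section Box

variable {d : ℕ} (i : Fin d) {l u : Fin d → ℝ} (p : ℕ) {C : ℝ} {βf : Fin d → ℝ → ℝ}
  {v : (Fin d → ℝ) → ℝ}

lemma setIntegral_Icc_faceEmb_deriv_mul_weight (hab : l i ≤ u i)
    (hβi : ∀ t ∈ Icc (l i) (u i), βf i t = C * |t - l i| ^ p) (hv : ContDiff ℝ 1 v)
    (z : {j : Fin d // j ≠ i} → ℝ) :
    ∫ t in Icc (l i) (u i), ((t - l i) * fderiv ℝ v (faceEmb i t z) (Pi.single i 1)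
        + (p + 1) * v (faceEmb i t z)) * ∏ k, βf k (faceEmb i t z k)
      = (u i - l i) * (v (faceEmb i (u i) z) * ∏ k, βf k (faceEmb i (u i) z k)) := by
  have hg (t : ℝ) : HasDerivAt (fun s => v (faceEmb i s z))
      (fderiv ℝ v (faceEmb i t z) (Pi.single i 1)) t :=
    ((hv.differentiable one_ne_zero) _).hasFDerivAt.comp_hasDerivAt t (hasDerivAt_faceEmb i z t)
  have hg' : Continuous fun t => fderiv ℝ v (faceEmb i t z) (Pi.single i 1) :=
    ((hv.continuous_fderiv one_ne_zero).clm_apply continuous_const).comp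
      (continuous_iff_continuousAt.2 fun t => (hasDerivAt_faceEmb i z t).continuousAt)
  set P := ∏ j : {j : Fin d // j ≠ i}, βf j (z j)
  simp only [prod_faceEmb]
  refine (setIntegral_Icc_deriv_mul_weight p hab (fun t _ => hg t) hg'.continuousOn
    (c := C * P) (β := fun t => βf i t * P) fun t ht => by rw [hβi t ht]; ring).trans ?_
  rw [hβi (u i) ⟨hab, le_rfl⟩, abs_of_nonneg (sub_nonneg.2 hab)]
  ring

lemma mul_setIntegral_face_eq_setIntegral_box (hab : l i ≤ u i) (hβcont : ∀ j, Continuous (βf j))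
    (hβi : ∀ t ∈ Icc (l i) (u i), βf i t = C * |t - l i| ^ p) (hv : ContDiff ℝ 1 v) :
    (u i - l i) * ∫ z in univ.pi fun j : {j : Fin d // j ≠ i} => Icc (l j) (u j),
        v (faceEmb i (u i) z) * ∏ k, βf k (faceEmb i (u i) z k)
      = (∫ x in univ.pi fun j => Icc (l j) (u j),
          (x i - l i) * fderiv ℝ v x (Pi.single i 1) * ∏ k, βf k (x k))
        + (p + 1) * ∫ x in univ.pi fun j => Icc (l j) (u j), v x * ∏ k, βf k (x k) := by
  have hQ : IsCompact (univ.pi fun j => Icc (l j) (u j)) :=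
    isCompact_univ_pi fun _ => isCompact_Icc
  have hβ : Continuous fun x : Fin d → ℝ => ∏ k, βf k (x k) := by fun_prop
  have hdv : Continuous fun x => fderiv ℝ v x (Pi.single i 1) :=
    (hv.continuous_fderiv one_ne_zero).clm_apply continuous_const
  have hvc : Continuous v := hv.continuous
  have hint {f : (Fin d → ℝ) → ℝ} (hf : Continuous f) :
      IntegrableOn f (univ.pi fun j => Icc (l j) (u j)) :=
    hf.continuousOn.integrableOn_compact hQ
  rw [← integral_const_mul, ← integral_const_mul, ← integral_add (hint (by fun_prop))
    (hint (by fun_prop))]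
  calc _ = ∫ z in univ.pi fun j : {j : Fin d // j ≠ i} => Icc (l j) (u j),
        ∫ t in Icc (l i) (u i), ((t - l i) * fderiv ℝ v (faceEmb i t z) (Pi.single i 1)
          + (p + 1) * v (faceEmb i t z)) * ∏ k, βf k (faceEmb i t z k) := by
        congr 1 with z
        exact (setIntegral_Icc_faceEmb_deriv_mul_weight i p hab hβi hv z).symm
    _ = ∫ x in univ.pi fun j => Icc (l j) (u j),
        ((x i - l i) * fderiv ℝ v x (Pi.single i 1) + (p + 1) * v x) * ∏ k, βf k (x k) := by
        rw [setIntegral_pi_Icc_eq_integral_face i l u (hint (by fun_prop))]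
        simp only [faceEmb_self]
    _ = _ := by
        simp only [add_mul, mul_assoc]

end Box

lemma div_sub_div_eq_of_mul_eq {K : Type*} [Field K] {a b c e r q L : K} (hL : L ≠ 0)
    (hq : q ≠ 0) (ha : L * a = e + q * c) (hb : L * b = q * r) :
    a / b - c / r = 1 / q * (e / r) := by
  rw [← mul_div_mul_left a b hL, ha, hb, add_div, mul_div_mul_left c r hq, div_mul_div_comm,
    one_mul]
  ring

theorem weighted_trace_identity_general (d : ℕ) (i : Fin d)
    (l u : Fin d → ℝ) (hlu : ∀ j, l j < u j) (p : ℕ)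
    (C : ℝ) (βf : Fin d → ℝ → ℝ)
    (hβcont : ∀ j, Continuous (βf j))
    (hβi : ∀ t ∈ Set.Icc (l i) (u i), βf i t = C * |t - l i| ^ p)
    (w : (Fin d → ℝ) → ℝ) (hw : ContDiff ℝ 1 w) :
    (∫ z in Set.univ.pi fun j : {j : Fin d // j ≠ i} => Set.Icc (l j) (u j),
          w (faceEmb i (u i) z) * ∏ k, βf k (faceEmb i (u i) z k)) /
        (∫ z in Set.univ.pi fun j : {j : Fin d // j ≠ i} => Set.Icc (l j) (u j),
          ∏ k, βf k (faceEmb i (u i) z k))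
      - (∫ x in Set.univ.pi fun j => Set.Icc (l j) (u j),
          w x * ∏ k, βf k (x k)) /
        (∫ x in Set.univ.pi fun j => Set.Icc (l j) (u j), ∏ k, βf k (x k))
      = (1 / (p + 1 : ℝ)) *
        ((∫ x in Set.univ.pi fun j => Set.Icc (l j) (u j),
            ((x i - l i) * fderiv ℝ w x (Pi.single i 1)) * ∏ k, βf k (x k)) /
          (∫ x in Set.univ.pi fun j => Set.Icc (l j) (u j),
            ∏ k, βf k (x k))) := by
  have hab := (hlu i).le
  have hw_face := mul_setIntegral_face_eq_setIntegral_box i p hab hβcont hβi hw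
  have hone_face :=
    mul_setIntegral_face_eq_setIntegral_box i p hab hβcont hβi (v := fun _ => 1) contDiff_const
  simp only [fderiv_fun_const, Pi.zero_apply, zero_apply, mul_zero, zero_mul,
    integral_zero, zero_add, one_mul] at hone_face
  exact div_sub_div_eq_of_mul_eq (sub_pos.2 (hlu i)).ne' (by positivity) hw_face hone_face

/-- Weighted trace identity for boundary B-splines: on the box
`Q = [l 1, u 1] × ⋯ × [l d, u d]` with face `S = {x i = u i}`, let
`β(x) = β 1 (x 1) ⋯ β d (x d)` be a nonnegative tensor-product weight whose
`i`-th factor is `β i (t) = C |t − l i|^p` on `[l i, u i]`, and let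
`γ(x) = (x i − l i) eᵢ`. Then for every `w ∈ W^{1,1}(Q)` (stated for `C¹`
functions, dense in `W^{1,1}(Q)`):
`(∫_S wβ)/(∫_S β) − (∫_Q wβ)/(∫_Q β) = (1/(p+1)) (∫_Q (γ·∇w) β)/(∫_Q β)`. -/
theorem weighted_trace_identity (d : ℕ) (hd : 0 < d) (i : Fin d)
    (l u : Fin d → ℝ) (hlu : ∀ j, l j < u j) (p : ℕ) (hp : 0 < p)
    (C : ℝ) (hC : 0 < C) (βf : Fin d → ℝ → ℝ)
    (hβnonneg : ∀ j, ∀ t ∈ Set.Icc (l j) (u j), 0 ≤ βf j t)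
    (hβcont : ∀ j, Continuous (βf j))
    (hβi : ∀ t ∈ Set.Icc (l i) (u i), βf i t = C * |t - l i| ^ p)
    (hSpos : 0 < ∫ z in Set.univ.pi fun j : {j : Fin d // j ≠ i} =>
        Set.Icc (l j) (u j), ∏ k, βf k (faceEmb i (u i) z k))
    (hQpos : 0 < ∫ x in Set.univ.pi fun j => Set.Icc (l j) (u j),
        ∏ k, βf k (x k))
    (w : (Fin d → ℝ) → ℝ) (hw : ContDiff ℝ 1 w) :
    (∫ z in Set.univ.pi fun j : {j : Fin d // j ≠ i} => Set.Icc (l j) (u j),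
          w (faceEmb i (u i) z) * ∏ k, βf k (faceEmb i (u i) z k)) /
        (∫ z in Set.univ.pi fun j : {j : Fin d // j ≠ i} => Set.Icc (l j) (u j),
          ∏ k, βf k (faceEmb i (u i) z k))
      - (∫ x in Set.univ.pi fun j => Set.Icc (l j) (u j),
          w x * ∏ k, βf k (x k)) /
        (∫ x in Set.univ.pi fun j => Set.Icc (l j) (u j), ∏ k, βf k (x k))
      = (1 / (p + 1 : ℝ)) *
        ((∫ x in Set.univ.pi fun j => Set.Icc (l j) (u j),
            ((x i - l i) * fderiv ℝ w x (Pi.single i 1)) * ∏ k, βf k (x k)) /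
          (∫ x in Set.univ.pi fun j => Set.Icc (l j) (u j),
            ∏ k, βf k (x k))) :=
  weighted_trace_identity_general d i l u hlu p C βf hβcont hβi w hw
end
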